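/- For every finite simple graph G, there exist a finite simple graph H, an injective map τ : V(H) → ℝ, and a 3-list-assignment L of H such that (H,L) is a realization of G and the ordered graph (H,τ) is M_3-free. -/

import Mathlib

/-- `(H, τ)` contains no induced ordered copy of the ordered pattern graph `P`
on vertices `0 < 1 < ⋯ < m - 1`. -/
def PatternFree {W : Type*} {m : ℕ} (H : SimpleGraph W) (τ : W → ℝ)
    (P : SimpleGraph (Fin m)) : Prop :=
  ¬ ∃ x : Fin m → W,
      (∀ i j : Fin m, i < j → τ (x i) < τ (x j)) ∧
      ∀ i j : Fin m, H.Adj (x i) (x j) ↔ P.Adj i j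

/-- The ordered graph `M₃`: six vertices `v₁ < ⋯ < v₆` with exactly the edges
`v₁v₄`, `v₂v₅`, `v₃v₆`. -/
def M3 : SimpleGraph (Fin 6) :=
  SimpleGraph.fromEdgeSet {s(0, 3), s(1, 4), s(2, 5)}

/-!
Take one root cluster per vertex of `G` and add further clusters, each pinned to an earlier
cluster with the same label. Every cluster `k` is a triangle `(k,0), (k,1), (k,2)`; a pin from
`p` to `k` joins `(p,1), (p,2)` to `(k,0)`, so in every 3-coloring `(k,0)` gets the color of
`(p,0)`, and a gadget joining `(c,1)` to `(c+1,1), (c+1,2)` forces `(c,1)` to take the color of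
`(c+1,0)`, hence `(c,0)` and `(c+1,0)` get different colors. Gadgets are placed exactly between
consecutive clusters whose labels are adjacent in `G`, which makes the construction a
realization as soon as every edge of `G` occurs on two consecutive clusters.

Ordering the vertices cluster by cluster, two vertices of an induced ordered `M₃` never share a
cluster, and its three edges must be pins that pairwise cross. So it suffices to build the
clusters without three pairwise crossing pins. They are built by repeatedly copying a suffix of
the list of "live" clusters, in reverse order, to the end: the pins created at once are nested,
and no live cluster ever lies under the overlap of two crossing pins, so no later pin can
complete a triple crossing. Three such reversals put any two labels on consecutive clusters.
-/

lemma M3_adj_iff {i j : Fin 6} : M3.Adj i j ↔ (i : ℕ) + 3 = j ∨ (j : ℕ) + 3 = i := by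
  fin_cases i <;> fin_cases j <;> simp [M3]

lemma fin_three_eq_of_ne {a b c d : Fin 3} (hab : a ≠ b) (hac : a ≠ c) (hbc : b ≠ c)
    (hdb : d ≠ b) (hdc : d ≠ c) : d = a := by
  omega

lemma fin_three_neg_sub_ne {x y : Fin 3} (h : x ≠ y) : -x - y ≠ x ∧ -x - y ≠ y := by
  revert x y; decide

lemma List.getD_reverse_mem {α : Type*} {l : List α} {i : ℕ} (d : α) (hi : i < l.length) :
    l.reverse.getD i d ∈ l := by
  rw [List.getD_eq_getElem _ _ (by simpa using hi)]
  exact List.mem_reverse.mp (List.getElem_mem _)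

def Crossing3Free (pin : ℕ → ℕ → Prop) : Prop :=
  ∀ ⦃p₁ k₁ p₂ k₂ p₃ k₃⦄, pin p₁ k₁ → pin p₂ k₂ → pin p₃ k₃ →
    p₁ < p₂ → p₂ < p₃ → p₃ < k₁ → k₁ < k₂ → k₂ < k₃ → False

section ClusterGraph

variable {N : ℕ} (pin : ℕ → ℕ → Prop) (gad : ℕ → Prop)

def clusterRel (x y : Fin N × Fin 3) : Prop :=
  x.1 = y.1 ∨ (pin x.1 y.1 ∧ x.2 ≠ 0 ∧ y.2 = 0) ∨
    (gad x.1 ∧ (y.1 : ℕ) = x.1 + 1 ∧ x.2 = 1 ∧ y.2 ≠ 0)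

def clusterGraph (N : ℕ) : SimpleGraph (Fin N × Fin 3) :=
  SimpleGraph.fromRel (clusterRel pin gad)

def clusterOrder (x : Fin N × Fin 3) : ℝ := (3 * x.1 + x.2 : ℕ)

lemma clusterOrder_injective : Function.Injective (clusterOrder (N := N)) := by
  intro x y h
  have := Nat.cast_injective h
  ext <;> omega

variable {pin gad}

lemma clusterGraph_adj_of_fst_eq {x y : Fin N × Fin 3} (h : x.1 = y.1) (hne : x ≠ y) :
    (clusterGraph pin gad N).Adj x y :=
  (SimpleGraph.fromRel_adj _ _ _).mpr ⟨hne, .inl (.inl h)⟩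

lemma pin_of_clusterGraph_adj (hlt : ∀ p k, pin p k → p < k) {x y : Fin N × Fin 3}
    (hxy : (x.1 : ℕ) + 1 < y.1) (h : (clusterGraph pin gad N).Adj x y) : pin x.1 y.1 := by
  obtain ⟨-, h | h⟩ := (SimpleGraph.fromRel_adj _ _ _).mp h
  · rcases h with h | ⟨h, -⟩ | ⟨-, h, -⟩
    · exact absurd (congrArg Fin.val h) (by omega)
    · exact h
    · omega
  · rcases h with h | ⟨h, -⟩ | ⟨-, h, -⟩
    · exact absurd (congrArg Fin.val h) (by omega)
    · exact absurd (hlt _ _ h) (by omega)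
    · omega

theorem patternFree_clusterGraph (hlt : ∀ p k, pin p k → p < k) (hfree : Crossing3Free pin) :
    PatternFree (clusterGraph pin gad N) clusterOrder M3 := by
  rintro ⟨x, hord, hadj⟩
  have hle : ∀ i j, i < j → ((x i).1 : ℕ) ≤ (x j).1 := fun i j hij => by
    have := Nat.cast_lt.mp (hord i j hij); omega
  have hne : ∀ i j, i < j → x i ≠ x j := fun i j hij h => (hord i j hij).ne (congrArg _ h)
  have hmono : ∀ i j, i < j → ((x i).1 : ℕ) < (x j).1 := by
    intro i j hij
    refine (hle i j hij).lt_of_ne fun heq => ?_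
    have hj := M3_adj_iff.mp <| (hadj i j).mp <|
      clusterGraph_adj_of_fst_eq (Fin.ext heq) (hne i j hij)
    -- the pattern vertex right after `x i` lies between `x i` and `x j`, hence in their cluster
    let t : Fin 6 := ⟨i + 1, by omega⟩
    have hit : i < t := Fin.lt_def.mpr (by simp [t])
    have htj : t < j := Fin.lt_def.mpr (by simp [t]; omega)
    have ht := M3_adj_iff.mp <| (hadj i t).mp <| clusterGraph_adj_of_fst_eq
      (Fin.ext (by have := hle i t hit; have := hle t j htj; omega)) (hne i t hit)
    have : (t : ℕ) = i + 1 := rfl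
    omega
  have hpin : ∀ i j : Fin 6, (i : ℕ) + 3 = j → pin (x i).1 (x j).1 := by
    intro i j hij
    let t : Fin 6 := ⟨i + 1, by omega⟩
    have hit := hmono i t (Fin.lt_def.mpr (by simp [t]))
    have htj := hmono t j (Fin.lt_def.mpr (by simp [t]; omega))
    exact pin_of_clusterGraph_adj hlt (by omega) ((hadj i j).mpr (M3_adj_iff.mpr (.inl hij)))
  exact hfree (hpin 0 3 rfl) (hpin 1 4 rfl) (hpin 2 5 rfl) (hmono 0 1 (by decide))
    (hmono 1 2 (by decide)) (hmono 2 3 (by decide)) (hmono 3 4 (by decide))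
    (hmono 4 5 (by decide))

section Coloring

variable {f : Fin N × Fin 3 → Fin 3}

lemma eq_of_clusterGraph_adj_adj (hf : ∀ x y, (clusterGraph pin gad N).Adj x y → f x ≠ f y)
    {k : Fin N} {v : Fin N × Fin 3} (h₁ : (clusterGraph pin gad N).Adj v (k, 1))
    (h₂ : (clusterGraph pin gad N).Adj v (k, 2)) : f v = f (k, 0) :=
  have tri (s t : Fin 3) (hst : s ≠ t) : f (k, s) ≠ f (k, t) :=
    hf _ _ (clusterGraph_adj_of_fst_eq rfl (by simpa using hst))
  fin_three_eq_of_ne (tri 0 1 (by decide)) (tri 0 2 (by decide)) (tri 1 2 (by decide))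
    (hf _ _ h₁) (hf _ _ h₂)

lemma eq_of_pin_of_clusterGraph (hf : ∀ x y, (clusterGraph pin gad N).Adj x y → f x ≠ f y)
    {p k : Fin N} (h : pin p k) : f (k, 0) = f (p, 0) :=
  have adj (s : Fin 3) (hs : s ≠ 0) : (clusterGraph pin gad N).Adj (k, 0) (p, s) :=
    (SimpleGraph.fromRel_adj _ _ _).mpr ⟨by simp [hs.symm], .inr (.inr (.inl ⟨h, hs, rfl⟩))⟩
  eq_of_clusterGraph_adj_adj hf (adj 1 (by decide)) (adj 2 (by decide))

lemma ne_of_gad_of_clusterGraph (hf : ∀ x y, (clusterGraph pin gad N).Adj x y → f x ≠ f y)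
    {c c' : Fin N} (h : gad c) (hc' : (c' : ℕ) = c + 1) : f (c, 0) ≠ f (c', 0) := by
  have hne : c ≠ c' := by rintro rfl; omega
  have adj (s : Fin 3) (hs : s ≠ 0) : (clusterGraph pin gad N).Adj (c, 1) (c', s) :=
    (SimpleGraph.fromRel_adj _ _ _).mpr ⟨by simp [hne], .inl (.inr (.inr ⟨h, hc', rfl, hs⟩))⟩
  rw [← eq_of_clusterGraph_adj_adj hf (adj 1 (by decide)) (adj 2 (by decide))]
  exact hf _ _ (clusterGraph_adj_of_fst_eq rfl (by simp))

lemma exists_coloring_clusterGraph (h : ℕ → Fin 3)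
    (hpin : ∀ p k, pin p k → p < N → k < N → h p = h k)
    (hgad : ∀ c, gad c → c + 1 < N → h c ≠ h (c + 1)) :
    ∃ f : Fin N × Fin 3 → Fin 3, (∀ x y, (clusterGraph pin gad N).Adj x y → f x ≠ f y) ∧
      ∀ k : Fin N, f (k, 0) = h k := by
  classical
  let a (k : ℕ) : Fin 3 := if gad k ∧ k + 1 < N then h (k + 1) else h k + 1
  have ha (k : ℕ) : a k ≠ h k := by
    by_cases hk : gad k ∧ k + 1 < N
    · simpa [a, hk] using (hgad k hk.1 hk.2).symm
    · simp [a, hk]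
  let f (x : Fin N × Fin 3) : Fin 3 := ![h x.1, a x.1, -h x.1 - a x.1] x.2
  have hslot (k : Fin N) (s : Fin 3) (hs : s ≠ 0) : f (k, s) ≠ h k := by
    fin_cases s
    · exact absurd rfl hs
    · exact ha k
    · exact (fin_three_neg_sub_ne (ha k).symm).1
  have hrel : ∀ x y, x ≠ y → clusterRel pin gad x y → f x ≠ f y := by
    rintro ⟨k, s⟩ ⟨l, t⟩ hne hxy
    dsimp only [clusterRel] at hxy
    rcases hxy with rfl | ⟨hkl, hs, rfl⟩ | ⟨hk, hl, rfl, ht⟩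
    · have hst : s ≠ t := by simpa using hne
      have h3 := fin_three_neg_sub_ne (ha k).symm
      fin_cases s <;> fin_cases t <;> simp_all [f, eq_comm]
    · rw [show f (l, 0) = h k from (hpin _ _ hkl k.2 l.2).symm]
      exact hslot k s hs
    · have hkN : (k : ℕ) + 1 < N := hl ▸ l.2
      rw [show f (k, 1) = h l by simp [f, a, hk, hkN, hl]]
      exact (hslot l t ht).symm
  refine ⟨f, fun x y hxy => ?_, fun k => rfl⟩
  obtain ⟨hne, hxy | hyx⟩ := (SimpleGraph.fromRel_adj _ _ _).mp hxy
  · exact hrel x y hne hxy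
  · exact (hrel y x hne.symm hyx).symm

theorem clusterGraph_exists_coloring_iff (h : ℕ → Fin 3) :
    (∃ f : Fin N × Fin 3 → Fin 3, (∀ x y, (clusterGraph pin gad N).Adj x y → f x ≠ f y) ∧
        ∀ k : Fin N, f (k, 0) = h k) ↔
      (∀ p k, pin p k → p < N → k < N → h p = h k) ∧
        ∀ c, gad c → c + 1 < N → h c ≠ h (c + 1) := by
  refine ⟨fun ⟨f, hf, hf0⟩ => ⟨fun p k hpk hp hk => ?_, fun c hc hc1 => ?_⟩,
    fun ⟨hpin, hgad⟩ => exists_coloring_clusterGraph h hpin hgad⟩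
  · simpa [hf0] using (eq_of_pin_of_clusterGraph hf (p := ⟨p, hp⟩) (k := ⟨k, hk⟩) hpk).symm
  · simpa [hf0] using ne_of_gad_of_clusterGraph hf (c := ⟨c, by omega⟩) (c' := ⟨c + 1, hc1⟩) hc rfl

end Coloring

end ClusterGraph

/-- Clusters `0, …, N - 1`: cluster `k` carries the label `lab k` and, unless it is a root, is
pinned to the earlier cluster `par k`. New clusters are only ever pinned to clusters of `live`. -/
structure Pinning where
  N : ℕ
  lab : ℕ → ℕ
  par : ℕ → ℕ
  live : List ℕ

namespace Pinning

variable (d : Pinning)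

def Pin (p k : ℕ) : Prop := k < d.N ∧ d.par k = p ∧ p < k

def Consecutive (a b : ℕ) : Prop := ∃ c, c + 1 < d.N ∧ d.lab c = a ∧ d.lab (c + 1) = b

def liveLabels : List ℕ := d.live.map d.lab

/-- Under this invariant a pin starting at a live cluster never crosses two pins that cross
each other. -/
def LiveAvoidsCrossings : Prop :=
  ∀ ⦃p₁ k₁ p₂ k₂⦄, d.Pin p₁ k₁ → d.Pin p₂ k₂ → p₁ < p₂ → p₂ < k₁ → k₁ < k₂ →
    ∀ c ∈ d.live, c ≤ p₂ ∨ k₁ ≤ c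

structure Valid (n : ℕ) : Prop where
  le_N : n ≤ d.N
  lab_root : ∀ k < n, d.lab k = k
  pin_par : ∀ k, n ≤ k → k < d.N → d.Pin (d.par k) k
  lab_eq_of_pin : ∀ ⦃p k⦄, d.Pin p k → d.lab p = d.lab k
  live_sorted : d.live.Pairwise (· < ·)
  live_lt : ∀ c ∈ d.live, c < d.N
  mem_liveLabels : ∀ v < n, v ∈ d.liveLabels
  liveAvoidsCrossings : d.LiveAvoidsCrossings
  crossing3Free : Crossing3Free d.Pin

def base (n : ℕ) : Pinning := ⟨n, id, id, List.range n⟩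

lemma base_valid (n : ℕ) : (base n).Valid n where
  le_N := le_rfl
  lab_root _ _ := rfl
  pin_par k hk hk' := absurd hk' (not_lt.mpr hk)
  lab_eq_of_pin _ k h := absurd h.2.2 (h.2.1 ▸ lt_irrefl k)
  live_sorted := List.pairwise_lt_range
  live_lt _ := List.mem_range.mp
  mem_liveLabels v hv := by simpa [liveLabels, base] using hv
  liveAvoidsCrossings _ k _ _ h := absurd h.2.2 (h.2.1 ▸ lt_irrefl k)
  crossing3Free _ k _ _ _ _ h := absurd h.2.2 (h.2.1 ▸ lt_irrefl k)

/-- For `live = P ++ S`: the clusters of `S` are copied, in reverse order, to new clusters at the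
end, each pinned to its original, and the copies replace `S` in the live list. -/
def refresh (P S : List ℕ) : Pinning where
  N := d.N + S.length
  lab k := if k < d.N then d.lab k else d.lab (S.reverse.getD (k - d.N) 0)
  par k := if k < d.N then d.par k else S.reverse.getD (k - d.N) 0
  live := P ++ (List.range S.length).map (d.N + ·)

def refreshFrom (j : ℕ) : Pinning := d.refresh (d.live.take j) (d.live.drop j)

def Extends (d' : Pinning) : Prop := d.N ≤ d'.N ∧ ∀ k < d.N, d'.lab k = d.lab k

variable {d} {n : ℕ} {P S : List ℕ}

@[simp] lemma refresh_N : (d.refresh P S).N = d.N + S.length := rfl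

@[simp] lemma refresh_live :
    (d.refresh P S).live = P ++ (List.range S.length).map (d.N + ·) := rfl

lemma refresh_lab_of_lt {k : ℕ} (hk : k < d.N) : (d.refresh P S).lab k = d.lab k := if_pos hk

lemma refresh_par_of_lt {k : ℕ} (hk : k < d.N) : (d.refresh P S).par k = d.par k := if_pos hk

lemma refresh_lab_add (i : ℕ) :
    (d.refresh P S).lab (d.N + i) = d.lab (S.reverse.getD i 0) := by
  simp [refresh]

lemma refresh_par_add (i : ℕ) : (d.refresh P S).par (d.N + i) = S.reverse.getD i 0 := by
  simp [refresh]

lemma pin_refresh_of_pin {p k : ℕ} (h : d.Pin p k) : (d.refresh P S).Pin p k :=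
  ⟨h.1.trans_le (Nat.le_add_right _ _), (refresh_par_of_lt h.1).trans h.2.1, h.2.2⟩

lemma pin_refresh_add (hS : ∀ c ∈ S, c < d.N) {i : ℕ} (hi : i < S.length) :
    (d.refresh P S).Pin (S.reverse.getD i 0) (d.N + i) :=
  ⟨by simpa using hi, refresh_par_add i,
    (hS _ (S.getD_reverse_mem 0 hi)).trans_le (Nat.le_add_right _ _)⟩

lemma pin_refresh_cases {p k : ℕ} (h : (d.refresh P S).Pin p k) :
    (k < d.N ∧ d.Pin p k) ∨ (d.N ≤ k ∧ p ∈ S) := by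
  obtain ⟨hkN, hpar, hpk⟩ := h
  by_cases hk : k < d.N
  · exact .inl ⟨hk, hk, (refresh_par_of_lt hk).symm.trans hpar, hpk⟩
  · obtain ⟨i, rfl⟩ := Nat.exists_eq_add_of_le (not_lt.mp hk)
    rw [refresh_par_add] at hpar
    exact .inr ⟨not_lt.mp hk, hpar ▸ S.getD_reverse_mem 0 (by simp at hkN; omega)⟩

lemma lt_of_pin_refresh_of_lt (hS : S.Pairwise (· < ·)) {p k p' k' : ℕ}
    (h : (d.refresh P S).Pin p k) (h' : (d.refresh P S).Pin p' k') (hk : d.N ≤ k)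
    (hkk' : k < k') : p' < p := by
  obtain ⟨i, rfl⟩ := Nat.exists_eq_add_of_le hk
  obtain ⟨i', rfl⟩ := Nat.exists_eq_add_of_le (hk.trans hkk'.le)
  obtain ⟨-, rfl, -⟩ := h
  obtain ⟨hi', rfl, -⟩ := h'
  simp only [refresh_par_add, refresh_N] at hi' ⊢
  rw [List.getD_eq_getElem _ _ (by simp; omega), List.getD_eq_getElem _ _ (by simp; omega)]
  exact List.pairwise_iff_getElem.mp (List.pairwise_reverse.mpr hS) _ _ _ _ (by omega)

lemma Valid.liveAvoidsCrossings_refresh (hd : d.Valid n) (hPS : d.live = P ++ S) :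
    (d.refresh P S).LiveAvoidsCrossings := by
  obtain ⟨-, hSsorted, hPS_lt⟩ := List.pairwise_append.mp (hPS ▸ hd.live_sorted)
  intro p₁ k₁ p₂ k₂ h₁ h₂ h₁₂ h₂₁ hk c hc
  rcases pin_refresh_cases h₁ with ⟨hk₁, h₁⟩ | ⟨hk₁, -⟩
  · rcases List.mem_append.mp hc with hc | hc
    · rcases pin_refresh_cases h₂ with ⟨-, h₂⟩ | ⟨-, hp₂⟩
      · exact hd.liveAvoidsCrossings h₁ h₂ h₁₂ h₂₁ hk c (hPS ▸ List.mem_append_left S hc)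
      · exact .inl (hPS_lt c hc p₂ hp₂).le
    · simp only [List.mem_map, List.mem_range] at hc
      omega
  · exact absurd (lt_of_pin_refresh_of_lt hSsorted h₁ h₂ hk₁ hk) h₁₂.not_gt

lemma Valid.crossing3Free_refresh (hd : d.Valid n) (hPS : d.live = P ++ S) :
    Crossing3Free (d.refresh P S).Pin := by
  obtain ⟨-, hSsorted, -⟩ := List.pairwise_append.mp (hPS ▸ hd.live_sorted)
  intro p₁ k₁ p₂ k₂ p₃ k₃ h₁ h₂ h₃ h₁₂ h₂₃ h₃₁ hk₁₂ hk₂₃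
  rcases pin_refresh_cases h₂ with ⟨hk₂, h₂⟩ | ⟨hk₂, -⟩
  · obtain ⟨-, h₁⟩ | ⟨hk₁, -⟩ := pin_refresh_cases h₁
    · rcases pin_refresh_cases h₃ with ⟨-, h₃⟩ | ⟨-, hp₃⟩
      · exact hd.crossing3Free h₁ h₂ h₃ h₁₂ h₂₃ h₃₁ hk₁₂ hk₂₃
      · have := hd.liveAvoidsCrossings h₁ h₂ h₁₂ (h₂₃.trans h₃₁) hk₁₂ p₃
          (hPS ▸ List.mem_append_right P hp₃)
        omega
    · omega
  · exact absurd (lt_of_pin_refresh_of_lt hSsorted h₂ h₃ hk₂ hk₂₃) h₂₃.not_gt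

theorem Valid.refresh (hd : d.Valid n) (hPS : d.live = P ++ S) : (d.refresh P S).Valid n := by
  obtain ⟨hPsorted, -, -⟩ := List.pairwise_append.mp (hPS ▸ hd.live_sorted)
  have hP : ∀ c ∈ P, c < d.N := fun c hc => hd.live_lt c (hPS ▸ List.mem_append_left S hc)
  have hS : ∀ c ∈ S, c < d.N := fun c hc => hd.live_lt c (hPS ▸ List.mem_append_right P hc)
  refine
  { le_N := hd.le_N.trans (Nat.le_add_right _ _)
    lab_root := fun k hk => (refresh_lab_of_lt (hk.trans_le hd.le_N)).trans (hd.lab_root k hk)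
    pin_par := fun k hnk hk => ?_
    lab_eq_of_pin := fun p k h => ?_
    live_sorted := ?_
    live_lt := fun c hc => ?_
    mem_liveLabels := fun v hv => ?_
    liveAvoidsCrossings := hd.liveAvoidsCrossings_refresh hPS
    crossing3Free := hd.crossing3Free_refresh hPS }
  · by_cases hkN : k < d.N
    · rw [refresh_par_of_lt hkN]
      exact pin_refresh_of_pin (hd.pin_par k hnk hkN)
    · obtain ⟨i, rfl⟩ := Nat.exists_eq_add_of_le (not_lt.mp hkN)
      rw [refresh_par_add]
      exact pin_refresh_add hS (by simpa using hk)
  · rcases pin_refresh_cases h with ⟨hk, h⟩ | ⟨hk, hp⟩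
    · rw [refresh_lab_of_lt hk, refresh_lab_of_lt (h.2.2.trans hk), hd.lab_eq_of_pin h]
    · obtain ⟨i, rfl⟩ := Nat.exists_eq_add_of_le hk
      obtain ⟨-, hpar, -⟩ := h
      rw [refresh_lab_add, refresh_lab_of_lt (hS p hp), ← hpar, refresh_par_add]
  · simp only [refresh_live, List.pairwise_append, List.pairwise_map, List.mem_map,
      List.mem_range]
    exact ⟨hPsorted, List.pairwise_lt_range.imp (by omega),
      fun a ha b ⟨i, _, hb⟩ => hb ▸ (hP a ha).trans_le (Nat.le_add_right _ _)⟩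
  · rcases List.mem_append.mp hc with hc | hc
    · exact (hP c hc).trans_le (Nat.le_add_right _ _)
    · simp only [List.mem_map, List.mem_range] at hc
      simp only [refresh_N]
      omega
  · obtain ⟨c, hc, rfl⟩ := List.mem_map.mp (hd.mem_liveLabels v hv)
    rcases List.mem_append.mp (hPS ▸ hc) with hc | hc
    · exact List.mem_map.mpr ⟨c, List.mem_append_left _ hc, refresh_lab_of_lt (hP c hc)⟩
    · obtain ⟨i, hi, hci⟩ := List.getElem_of_mem (List.mem_reverse.mpr hc)
      refine List.mem_map.mpr ⟨d.N + i, List.mem_append_right _ ?_, ?_⟩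
      · simpa using hi
      · rw [refresh_lab_add, List.getD_eq_getElem _ _ hi, hci]

lemma liveLabels_refresh (hP : ∀ c ∈ P, c < d.N) :
    (d.refresh P S).liveLabels = P.map d.lab ++ (S.map d.lab).reverse := by
  simp only [liveLabels, refresh_live, List.map_append, List.map_map]
  congr 1
  · exact List.map_congr_left fun c hc => refresh_lab_of_lt (hP c hc)
  · refine List.ext_getElem (by simp) fun i h₁ h₂ => ?_
    simp only [List.getElem_map, List.getElem_range, Function.comp_apply, refresh_lab_add]
    rw [List.getD_eq_getElem _ _ (by simpa using h₁)]
    simp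

lemma consecutive_refresh {a b : ℕ} {R : List ℕ} (h : S.map d.lab = a :: b :: R) :
    (d.refresh P S).Consecutive b a := by
  have hlen : S.length = R.length + 2 := by simpa using congrArg List.length h
  have hrev : S.reverse.map d.lab = R.reverse ++ [b, a] := by
    rw [List.map_reverse, h]; simp
  have lab_eq (i : ℕ) (hi : i < S.length) :
      (d.refresh P S).lab (d.N + i) = (R.reverse ++ [b, a])[i]'(by simp; omega) := by
    rw [refresh_lab_add, List.getD_eq_getElem _ _ (by simpa using hi)]
    simp only [← hrev, List.getElem_map]
  refine ⟨d.N + R.length, by simp; omega, ?_, ?_⟩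
  · rw [lab_eq _ (by omega)]; simp
  · rw [show d.N + R.length + 1 = d.N + (R.length + 1) by ring, lab_eq _ (by omega)]; simp

lemma Extends.trans {d' d'' : Pinning} (h : d.Extends d') (h' : d'.Extends d'') :
    d.Extends d'' :=
  ⟨h.1.trans h'.1, fun k hk => (h'.2 k (hk.trans_le h.1)).trans (h.2 k hk)⟩

lemma extends_refresh : d.Extends (d.refresh P S) :=
  ⟨Nat.le_add_right _ _, fun _ hk => refresh_lab_of_lt hk⟩

lemma Consecutive.of_extends {d' : Pinning} {a b : ℕ} (hc : d.Consecutive a b)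
    (h : d.Extends d') : d'.Consecutive a b := by
  obtain ⟨c, hc, rfl, rfl⟩ := hc
  exact ⟨c, hc.trans_le h.1, h.2 c (by omega), h.2 (c + 1) hc⟩

lemma Valid.refreshFrom (hd : d.Valid n) (j : ℕ) : (d.refreshFrom j).Valid n :=
  hd.refresh (List.take_append_drop j d.live).symm

lemma Valid.liveLabels_refreshFrom (hd : d.Valid n) (j : ℕ) :
    (d.refreshFrom j).liveLabels = d.liveLabels.take j ++ (d.liveLabels.drop j).reverse := by
  rw [Pinning.refreshFrom, liveLabels_refresh fun c hc => hd.live_lt c (List.mem_of_mem_take hc),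
    List.map_take, List.map_drop, liveLabels]

lemma consecutive_refreshFrom {j a b : ℕ} {R : List ℕ}
    (h : d.liveLabels.drop j = a :: b :: R) : (d.refreshFrom j).Consecutive b a :=
  consecutive_refresh (by rwa [List.map_drop])

lemma Valid.exists_consecutive_of_liveLabels_eq (hd : d.Valid n) {a b : ℕ} {A D E : List ℕ}
    (hL : d.liveLabels = A ++ a :: (D ++ b :: E)) :
    ∃ d', d'.Valid n ∧ d.Extends d' ∧ d'.Consecutive b a := by
  set d₁ := d.refreshFrom (A.length + 1 + D.length)
  set d₂ := d₁.refreshFrom (A.length + 1)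
  have hL₁ : d₁.liveLabels = (A ++ [a]) ++ (D ++ E.reverse ++ [b]) := by
    rw [hd.liveLabels_refreshFrom, hL,
      show A ++ a :: (D ++ b :: E) = (A ++ a :: D) ++ b :: E by simp,
      List.take_left' (by simp; omega), List.drop_left' (by simp; omega)]
    simp
  have hL₂ : d₂.liveLabels = A ++ a :: b :: (E ++ D.reverse) := by
    rw [(hd.refreshFrom _).liveLabels_refreshFrom, hL₁, List.take_left' (by simp),
      List.drop_left' (by simp)]
    simp
  refine ⟨d₂.refreshFrom A.length, ((hd.refreshFrom _).refreshFrom _).refreshFrom _,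
    extends_refresh.trans (extends_refresh.trans extends_refresh),
    consecutive_refreshFrom (R := E ++ D.reverse) ?_⟩
  rw [hL₂, List.drop_left' rfl]

lemma Valid.exists_consecutive (hd : d.Valid n) {a b : ℕ} (ha : a < n) (hb : b < n) (hab : a ≠ b) :
    ∃ d', d'.Valid n ∧ d.Extends d' ∧ (d'.Consecutive a b ∨ d'.Consecutive b a) := by
  obtain ⟨A, T, hAT⟩ := List.append_of_mem (hd.mem_liveLabels a ha)
  have hb' := hd.mem_liveLabels b hb
  rw [hAT, List.mem_append, List.mem_cons] at hb'
  rcases hb' with hbA | rfl | hbT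
  · obtain ⟨A', D, rfl⟩ := List.append_of_mem hbA
    obtain ⟨d', hd', hext, hc⟩ := hd.exists_consecutive_of_liveLabels_eq (a := b) (b := a)
      (A := A') (D := D) (E := T) (by simp [hAT])
    exact ⟨d', hd', hext, .inl hc⟩
  · exact absurd rfl hab
  · obtain ⟨D, E, rfl⟩ := List.append_of_mem hbT
    obtain ⟨d', hd', hext, hc⟩ := hd.exists_consecutive_of_liveLabels_eq hAT
    exact ⟨d', hd', hext, .inr hc⟩

theorem exists_valid_consecutive (n : ℕ) : ∃ d : Pinning, d.Valid n ∧
    ∀ a < n, ∀ b < n, a ≠ b → d.Consecutive a b ∨ d.Consecutive b a := by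
  suffices ∀ l : List (ℕ × ℕ), ∃ d : Pinning, d.Valid n ∧
      ∀ p ∈ l, p.1 < n → p.2 < n → p.1 ≠ p.2 → d.Consecutive p.1 p.2 ∨ d.Consecutive p.2 p.1 by
    obtain ⟨d, hd, hl⟩ := this (List.range n ×ˢ List.range n)
    exact ⟨d, hd, fun a ha b hb => hl (a, b) (by simp [ha, hb]) ha hb⟩
  intro l
  induction l with
  | nil => exact ⟨base n, base_valid n, by simp⟩
  | cons p l ih =>
    obtain ⟨d, hd, hl⟩ := ih
    by_cases hp : p.1 < n ∧ p.2 < n ∧ p.1 ≠ p.2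
    · obtain ⟨d', hd', hext, hc⟩ := hd.exists_consecutive hp.1 hp.2.1 hp.2.2
      refine ⟨d', hd', List.forall_mem_cons.mpr ⟨fun _ _ _ => hc, fun q hq h₁ h₂ h₁₂ => ?_⟩⟩
      exact (hl q hq h₁ h₂ h₁₂).imp (·.of_extends hext) (·.of_extends hext)
    · exact ⟨d, hd, List.forall_mem_cons.mpr ⟨fun h₁ h₂ h₁₂ => absurd ⟨h₁, h₂, h₁₂⟩ hp, hl⟩⟩

lemma Valid.apply_lab_eq {β : Type*} (hd : d.Valid n) (h : ℕ → β)
    (hh : ∀ ⦃p k⦄, d.Pin p k → h p = h k) : ∀ k < d.N, h (d.lab k) = h k := by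
  intro k
  induction k using Nat.strong_induction_on with
  | _ k ih =>
    intro hk
    by_cases hkn : k < n
    · rw [hd.lab_root k hkn]
    · have hpin := hd.pin_par k (not_lt.mp hkn) hk
      rw [← hd.lab_eq_of_pin hpin, ← hh hpin]
      exact ih _ hpin.2.2 (hpin.2.2.trans hk)

def graph (d : Pinning) (G : SimpleGraph ℕ) : SimpleGraph (Fin d.N × Fin 3) :=
  clusterGraph d.Pin (fun c => G.Adj (d.lab c) (d.lab (c + 1))) d.N

theorem Valid.patternFree (hd : d.Valid n) (G : SimpleGraph ℕ) :
    PatternFree (d.graph G) clusterOrder M3 :=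
  patternFree_clusterGraph (fun _ _ h => h.2.2) hd.crossing3Free

theorem Valid.ne_of_consecutive (hd : d.Valid n) {G : SimpleGraph ℕ} {f : Fin d.N × Fin 3 → Fin 3}
    (hf : ∀ x y, (d.graph G).Adj x y → f x ≠ f y) {x y : Fin d.N} (hxy : G.Adj x y)
    (hc : d.Consecutive x y) : f (x, 0) ≠ f (y, 0) := by
  let h (k : ℕ) : Fin 3 := if hk : k < d.N then f (⟨k, hk⟩, 0) else 0
  obtain ⟨hpin, hgad⟩ := (clusterGraph_exists_coloring_iff h).mp ⟨f, hf, fun k => by simp [h]⟩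
  have hlab := hd.apply_lab_eq h fun p k hpk => hpin p k hpk (hpk.2.2.trans hpk.1) hpk.1
  obtain ⟨c, hc, hcx, hcy⟩ := hc
  intro heq
  refine hgad c (by rwa [hcx, hcy]) hc ?_
  rw [← hlab c (by omega), ← hlab (c + 1) hc, hcx, hcy]
  simpa [h] using heq

theorem Valid.exists_coloring (hd : d.Valid n) {G : SimpleGraph ℕ} (col : ℕ → Fin 3)
    (hcol : ∀ a b, G.Adj a b → col a ≠ col b) :
    ∃ f : Fin d.N × Fin 3 → Fin 3, (∀ x y, (d.graph G).Adj x y → f x ≠ f y) ∧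
      ∀ k : Fin d.N, f (k, 0) = col (d.lab k) :=
  (clusterGraph_exists_coloring_iff _).mpr
    ⟨fun _ _ hpk _ _ => congrArg col (hd.lab_eq_of_pin hpk), fun _ hc _ => hcol _ _ hc⟩

end Pinning

theorem realization_M3_free
    {VG : Type*} [Fintype VG] (G : SimpleGraph VG) :
    ∃ (W : Type) (_ : Fintype W) (H : SimpleGraph W) (ι : VG → W) (τ : W → ℝ)
      (L : W → Finset (Fin 3)),
      Function.Injective ι ∧ Function.Injective τ ∧
      (∀ u : VG, L (ι u) = (Finset.univ : Finset (Fin 3))) ∧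
      (∀ f : W → Fin 3, (∀ x y, H.Adj x y → f x ≠ f y) → (∀ x, f x ∈ L x) →
        ∀ u v : VG, G.Adj u v → f (ι u) ≠ f (ι v)) ∧
      (∀ g : VG → Fin 3, (∀ u v, G.Adj u v → g u ≠ g v) →
        ∃ f : W → Fin 3, (∀ x y, H.Adj x y → f x ≠ f y) ∧ (∀ x, f x ∈ L x) ∧
          ∀ u : VG, f (ι u) = g u) ∧
      PatternFree H τ M3 := by
  set n := Fintype.card VG
  let e := Fintype.equivFin VG
  let ν : VG ↪ ℕ := e.toEmbedding.trans Fin.valEmbedding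
  have hν (u : VG) : ν u < n := (e u).2
  obtain ⟨d, hd, hcons⟩ := Pinning.exists_valid_consecutive n
  refine ⟨_, inferInstance, d.graph (G.map ν), fun u => (⟨ν u, (hν u).trans_le hd.le_N⟩, 0),
    clusterOrder, fun _ => Finset.univ, fun u v h => ν.injective (congrArg (·.1.val) h),
    clusterOrder_injective, fun _ => rfl, ?_, ?_, hd.patternFree _⟩
  · intro f hf _ u v huv
    have hadj {u v : VG} (h : G.Adj u v) : (G.map ν).Adj (ν u) (ν v) :=
      SimpleGraph.map_adj_apply.mpr h
    rcases hcons _ (hν u) _ (hν v) (ν.injective.ne (G.ne_of_adj huv)) with hc | hc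
    · exact hd.ne_of_consecutive hf (hadj huv) hc
    · exact (hd.ne_of_consecutive hf (hadj huv.symm) hc).symm
  · intro g hg
    let col (a : ℕ) : Fin 3 := if ha : a < n then g (e.symm ⟨a, ha⟩) else 0
    have hcol (u : VG) : col (ν u) = g u := by
      rw [show col (ν u) = g (e.symm ⟨ν u, hν u⟩) from dif_pos (hν u)]
      simp [ν]
    obtain ⟨f, hf, hf0⟩ := hd.exists_coloring col (G := G.map ν) (by
      rintro _ _ ⟨-, u, v, huv, rfl, rfl⟩
      rw [hcol, hcol]
      exact hg u v huv)
    exact ⟨f, hf, fun _ => Finset.mem_univ _, fun u => by rw [hf0, hd.lab_root _ (hν u), hcol]⟩
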